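/- arXiv:1001.1014 — 6 statements merged into one kernel-verified Lean document; each statement's English description precedes it below -/
import Mathlib

section
/- Let X̃ᵢ = aUXᵢ + b for i = 1,…,n, where U is a unitary operator on H, a ≠ 0 is a real scalar, and b ∈ H. Then the trimmed mean of the transformed sample satisfies μ̃ = aU(μ̂) + b, where μ̂ is the trimmed mean of the original sample. -/
open scoped BigOperators RealInnerProductSpace

/-- The `k`-th smallest value (order statistic) of `f : Fin n → ℝ`. -/
noncomputable def kthSmallest {n : ℕ} (f : Fin n → ℝ) (k : ℕ) : ℝ :=
  sInf {t : ℝ | k ≤ (Finset.univ.filter fun j => f j ≤ t).card}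

/-- The α-radius `rᵢ`: the `⌈αn⌉`-th smallest interdistance `‖Xᵢ − Xⱼ‖`, `j = 1,…,n`. -/
noncomputable def sampleRadius {H : Type*} [NormedAddCommGroup H] {n : ℕ}
    (α : ℝ) (X : Fin n → H) (i : Fin n) : ℝ :=
  kthSmallest (fun j => ‖X i - X j‖) ⌈α * n⌉₊

/-- `rank(rᵢ) = #{j : rⱼ < rᵢ} + #{j ≤ i : rⱼ = rᵢ}`. -/
noncomputable def sampleRank {n : ℕ} (r : Fin n → ℝ) (i : Fin n) : ℕ :=
  (Finset.univ.filter fun j => r j < r i).card +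
  (Finset.univ.filter fun j => j ≤ i ∧ r j = r i).card

/-- The weight `w(Xᵢ) = g(rank(rᵢ)/n)`. -/
noncomputable def sampleWeight {H : Type*} [NormedAddCommGroup H] {n : ℕ}
    (g : ℝ → ℝ) (α : ℝ) (X : Fin n → H) (i : Fin n) : ℝ :=
  g ((sampleRank (sampleRadius α X) i : ℝ) / n)

/-- The trimmed mean `μ̂ = Σᵢ w(Xᵢ)Xᵢ / Σᵢ w(Xᵢ)`. -/
noncomputable def trimmedMean {H : Type*} [NormedAddCommGroup H] [InnerProductSpace ℝ H]
    {n : ℕ} (g : ℝ → ℝ) (α : ℝ) (X : Fin n → H) : H :=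
  (∑ i, sampleWeight g α X i)⁻¹ • ∑ i, sampleWeight g α X i • X i

/-- The trimmed covariance operator
`Ĉ(h) = Σᵢ w(Xᵢ)⟨Xᵢ − μ̂, h⟩(Xᵢ − μ̂) / Σᵢ w(Xᵢ)`, as a continuous linear map. -/
noncomputable def trimmedCov {H : Type*} [NormedAddCommGroup H] [InnerProductSpace ℝ H]
    [CompleteSpace H] {n : ℕ} (g : ℝ → ℝ) (α : ℝ) (X : Fin n → H) : H →L[ℝ] H :=
  (∑ i, sampleWeight g α X i)⁻¹ •
    ∑ i, sampleWeight g α X i •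
      ((innerSL ℝ (X i - trimmedMean g α X)).smulRight (X i - trimmedMean g α X))

/-! The α-radii of `a • U Xᵢ + b` are those of `Xᵢ` scaled by `|a| > 0`, so their ranks and hence
the weights are unchanged; the trimmed mean is then a center of mass with the same weights, and
centers of mass commute with affine maps. -/

open scoped Pointwise

section CenterMass

variable {ι R E F 𝓕 : Type*} [Field R] [AddCommGroup E] [Module R E] [AddCommGroup F]
  [Module R F]

lemma Finset.centerMass_add_const {t : Finset ι} {w : ι → R} (hw : ∑ i ∈ t, w i ≠ 0)
    (z : ι → E) (c : E) :
    t.centerMass w (fun i => z i + c) = t.centerMass w z + c := by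
  simp only [Finset.centerMass, smul_add, Finset.sum_add_distrib, ← Finset.sum_smul, smul_smul,
    inv_mul_cancel₀ hw, one_smul]

lemma map_centerMass [FunLike 𝓕 E F] [LinearMapClass 𝓕 R E F] (f : 𝓕) (t : Finset ι)
    (w : ι → R) (z : ι → E) :
    f (t.centerMass w z) = t.centerMass w (fun i => f (z i)) := by
  simp only [Finset.centerMass, map_smul, map_sum]

end CenterMass

lemma kthSmallest_const_mul {n : ℕ} (f : Fin n → ℝ) (k : ℕ) {c : ℝ} (hc : 0 < c) :
    kthSmallest (fun j => c * f j) k = c * kthSmallest f k := by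
  have hset : {t : ℝ | k ≤ (Finset.univ.filter fun j => c * f j ≤ t).card} =
      c • {t : ℝ | k ≤ (Finset.univ.filter fun j => f j ≤ t).card} := by
    ext t
    simp only [Set.mem_smul_set_iff_inv_smul_mem₀ hc.ne', Set.mem_ofPred_eq, smul_eq_mul,
      le_inv_mul_iff₀ hc]
  rw [kthSmallest, kthSmallest, hset, Real.sInf_smul_of_nonneg hc.le, smul_eq_mul]

lemma sampleRank_comp_strictMono {n : ℕ} (r : Fin n → ℝ) {φ : ℝ → ℝ} (hφ : StrictMono φ)
    (i : Fin n) : sampleRank (φ ∘ r) i = sampleRank r i := by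
  simp only [sampleRank, Function.comp_apply, hφ.lt_iff_lt, hφ.injective.eq_iff]

section SampleWeight

variable {E F : Type*} [NormedAddCommGroup E] [NormedAddCommGroup F] {n : ℕ}

lemma sampleRadius_of_norm_sub_eq_mul {X : Fin n → E} {Y : Fin n → F} {c : ℝ} (hc : 0 < c)
    (hXY : ∀ i j, ‖Y i - Y j‖ = c * ‖X i - X j‖) (α : ℝ) :
    sampleRadius α Y = fun i => c * sampleRadius α X i := by
  funext i
  simp only [sampleRadius, hXY i, kthSmallest_const_mul _ _ hc]

lemma sampleWeight_of_norm_sub_eq_mul {X : Fin n → E} {Y : Fin n → F} {c : ℝ} (hc : 0 < c)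
    (hXY : ∀ i j, ‖Y i - Y j‖ = c * ‖X i - X j‖) (g : ℝ → ℝ) (α : ℝ) :
    sampleWeight g α Y = sampleWeight g α X := by
  funext i
  rw [sampleWeight, sampleWeight, sampleRadius_of_norm_sub_eq_mul hc hXY]
  exact congrArg (fun k : ℕ => g (k / n))
    (sampleRank_comp_strictMono _ (strictMono_mul_left_of_pos hc) i)

end SampleWeight

lemma norm_smul_map_add_sub_smul_map_add {E F 𝓕 : Type*} [NormedAddCommGroup E]
    [NormedAddCommGroup F] [NormedSpace ℝ E] [NormedSpace ℝ F] [FunLike 𝓕 E F]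
    [LinearIsometryClass 𝓕 ℝ E F] (U : 𝓕) (a : ℝ) (b : F) (x y : E) :
    ‖(a • U x + b) - (a • U y + b)‖ = |a| * ‖x - y‖ := by
  rw [add_sub_add_right_eq_sub, ← smul_sub, ← map_sub, norm_smul,
    SemilinearIsometryClass.norm_map U, Real.norm_eq_abs]

lemma trimmedMean_eq_centerMass {H : Type*} [NormedAddCommGroup H] [InnerProductSpace ℝ H] {n : ℕ}
    (g : ℝ → ℝ) (α : ℝ) (X : Fin n → H) :
    trimmedMean g α X = Finset.univ.centerMass (sampleWeight g α X) X :=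
  rfl

theorem trimmedMean_equivariance_general
    {H : Type*} [NormedAddCommGroup H] [InnerProductSpace ℝ H]
    {n : ℕ} (X : Fin n → H) (α : ℝ)
    (g : ℝ → ℝ)
    (hw_pos : 0 < ∑ i, sampleWeight g α X i)
    (U : H ≃ₗᵢ[ℝ] H) (a : ℝ) (ha : a ≠ 0) (b : H)
    (Xt : Fin n → H) (hXt : ∀ i, Xt i = a • U (X i) + b) :
    trimmedMean g α Xt = a • U (trimmedMean g α X) + b := by
  have hweight : sampleWeight g α Xt = sampleWeight g α X :=
    sampleWeight_of_norm_sub_eq_mul (abs_pos.mpr ha)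
      (fun i j => by rw [hXt, hXt, norm_smul_map_add_sub_smul_map_add U]) g α
  rw [trimmedMean_eq_centerMass, trimmedMean_eq_centerMass, hweight, funext hXt,
    Finset.centerMass_add_const hw_pos.ne',
    Finset.centerMass_smul, map_centerMass]

/-- If `X̃ᵢ = a • U Xᵢ + b` with `U` unitary, `a ≠ 0`, `b ∈ H`, then the
trimmed mean of the transformed sample satisfies `μ̃ = a • U μ̂ + b`. -/
theorem trimmedMean_equivariance
    {H : Type*} [NormedAddCommGroup H] [InnerProductSpace ℝ H] [CompleteSpace H]
    [SecondCountableTopology H]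
    {n : ℕ} (X : Fin n → H) (α β : ℝ)
    (hα : 0 < α) (hα' : α ≤ 1 / 2) (hβ : 0 ≤ β) (hβ' : β ≤ 1 / 2)
    (g : ℝ → ℝ)
    (hg_nonneg : ∀ t ∈ Set.Icc (0 : ℝ) 1, 0 ≤ g t)
    (hg_bdd : BddAbove (g '' Set.Icc (0 : ℝ) 1))
    (hg_mono : AntitoneOn g (Set.Icc (0 : ℝ) 1))
    (hg_pos : ∀ t ∈ Set.Icc (0 : ℝ) 1, t < 1 - β → 0 < g t)
    (hg_zero : ∀ t ∈ Set.Icc (0 : ℝ) 1, 1 - β ≤ t → g t = 0)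
    (hw_pos : 0 < ∑ i, sampleWeight g α X i)
    (U : H ≃ₗᵢ[ℝ] H) (a : ℝ) (ha : a ≠ 0) (b : H)
    (Xt : Fin n → H) (hXt : ∀ i, Xt i = a • U (X i) + b) :
    trimmedMean g α Xt = a • U (trimmedMean g α X) + b :=
  trimmedMean_equivariance_general X α g hw_pos U a ha b Xt hXt
end

section
/- Suppose α ∈ (0, 1/2], β ∈ [0, 1/2] and ⌈αn⌉ ≥ 3. If k < min(⌈αn⌉, ⌊βn⌋ + 2), then the trimmed mean does not break down under k-contamination: sup{‖μ̂(X̃)‖ : X̃ a k-contaminated sample of X₁,…,Xₙ} < ∞. -/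
open scoped BigOperators RealInnerProductSpace

open scoped Classical in
/-- `X̃` is a `k`-contaminated version of the sample `X`: `X̃ᵢ = Xᵢ` for at least `n − k`
indices `i`. -/
noncomputable def Contaminated {H : Type*} {n : ℕ} (k : ℕ) (X Xt : Fin n → H) : Prop :=
  n - k ≤ (Finset.univ.filter fun i => Xt i = X i).card

lemma sampleRank_pos {n : ℕ} (r : Fin n → ℝ) (i : Fin n) : 1 ≤ sampleRank r i := by
  have h : i ∈ Finset.univ.filter fun j => j ≤ i ∧ r j = r i := by simp
  have := Finset.card_pos.mpr ⟨i, h⟩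
  unfold sampleRank
  omega

lemma sampleRank_le {n : ℕ} (r : Fin n → ℝ) (i : Fin n) : sampleRank r i ≤ n := by
  have hd : Disjoint (Finset.univ.filter fun j => r j < r i)
      (Finset.univ.filter fun j => j ≤ i ∧ r j = r i) := by
    rw [Finset.disjoint_left]
    intro j hj hj'
    simp only [Finset.mem_filter] at hj hj'
    exact absurd hj'.2.2 (ne_of_lt hj.2)
  unfold sampleRank
  rw [← Finset.card_union_of_disjoint hd]
  exact le_trans (Finset.card_le_univ _) (by simp)

lemma kthSmallest_le {n : ℕ} (f : Fin n → ℝ) (hf : ∀ j, 0 ≤ f j) {k : ℕ} (hk : 1 ≤ k)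
    {t : ℝ} (ht : k ≤ (Finset.univ.filter fun j => f j ≤ t).card) : kthSmallest f k ≤ t := by
  refine csInf_le ⟨0, fun s hs => ?_⟩ ht
  obtain ⟨j, hj⟩ := Finset.card_pos.mp (lt_of_lt_of_le hk hs)
  simp only [Finset.mem_filter] at hj
  exact le_trans (hf j) hj.2

lemma le_kthSmallest {n : ℕ} (hn : 0 < n) (f : Fin n → ℝ) {k : ℕ} (hk : k ≤ n) {t : ℝ}
    (h : ∀ s : ℝ, k ≤ (Finset.univ.filter fun j => f j ≤ s).card → t ≤ s) :
    t ≤ kthSmallest f k := by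
  refine le_csInf ⟨Finset.univ.sup' ⟨⟨0, hn⟩, Finset.mem_univ _⟩ f, ?_⟩ h
  have heq : (Finset.univ.filter fun j => f j ≤ Finset.univ.sup' ⟨⟨0, hn⟩, Finset.mem_univ _⟩ f)
      = Finset.univ :=
    Finset.filter_true_of_mem fun j _ => Finset.le_sup' f (Finset.mem_univ j)
  simp only [Set.mem_setOf_eq, heq]
  simpa using hk

/-- If `⌈αn⌉ ≥ 3` and `k < min(⌈αn⌉, ⌊βn⌋ + 2)`, then the trimmed mean
does not break down under `k`-contamination: the norms `‖μ̂(X̃)‖` over all `k`-contaminated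
samples `X̃` are uniformly bounded. -/
theorem trimmedMean_no_breakdown
    {H : Type*} [NormedAddCommGroup H] [InnerProductSpace ℝ H] [CompleteSpace H]
    [SecondCountableTopology H]
    {n : ℕ} (X : Fin n → H) (α β : ℝ)
    (hα : 0 < α) (hα' : α ≤ 1 / 2) (hβ : 0 ≤ β) (hβ' : β ≤ 1 / 2)
    (g : ℝ → ℝ)
    (hg_nonneg : ∀ t ∈ Set.Icc (0 : ℝ) 1, 0 ≤ g t)
    (hg_bdd : BddAbove (g '' Set.Icc (0 : ℝ) 1))
    (hg_mono : AntitoneOn g (Set.Icc (0 : ℝ) 1))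
    (hg_pos : ∀ t ∈ Set.Icc (0 : ℝ) 1, t < 1 - β → 0 < g t)
    (hg_zero : ∀ t ∈ Set.Icc (0 : ℝ) 1, 1 - β ≤ t → g t = 0)
    (hn : 3 ≤ ⌈α * n⌉₊)
    (k : ℕ) (hk : k < min ⌈α * n⌉₊ (⌊β * n⌋₊ + 2)) :
    ∃ M : ℝ, ∀ Xt : Fin n → H, Contaminated k X Xt → ‖trimmedMean g α Xt‖ ≤ M := by
  classical
  obtain ⟨hkα, hkβ⟩ := lt_min_iff.mp hk
  have hcn : ⌈α * n⌉₊ ≤ n := by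
    rw [Nat.ceil_le]
    have h0 : (0:ℝ) ≤ n := Nat.cast_nonneg n
    nlinarith
  have hn3 : 3 ≤ n := le_trans hn hcn
  have hn0 : 0 < n := by omega
  have hnR : (0:ℝ) < n := by exact_mod_cast hn0
  have h2c : 2 * ⌈α * n⌉₊ ≤ n + 1 := by
    have h1 : (⌈α * n⌉₊ : ℝ) < α * n + 1 := Nat.ceil_lt_add_one (by positivity)
    have h2 : α * n ≤ n / 2 := by nlinarith
    have h3 : ((2 * ⌈α * n⌉₊ : ℕ) : ℝ) < ((n + 2 : ℕ) : ℝ) := by push_cast; nlinarith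
    have h4 : 2 * ⌈α * n⌉₊ < n + 2 := by exact_mod_cast h3
    omega
  have hkn : k ≤ n := le_trans (le_of_lt hkα) hcn
  have hne : (Finset.univ : Finset (Fin n)).Nonempty := ⟨⟨0, hn0⟩, Finset.mem_univ _⟩
  set B := Finset.univ.sup' hne (fun j => ‖X j‖) with hBdef
  have hB : ∀ j, ‖X j‖ ≤ B := fun j => Finset.le_sup' (fun j => ‖X j‖) (Finset.mem_univ j)
  have hB0 : 0 ≤ B := le_trans (norm_nonneg _) (hB ⟨0, hn0⟩)
  refine ⟨3 * B + 1, fun Xt hXt => ?_⟩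
  set r := sampleRadius α Xt with hrdef
  set G := Finset.univ.filter (fun i => Xt i = X i) with hGdef
  have hGcard : n - k ≤ G.card := hXt
  have hGn : G.card ≤ n := by simpa using Finset.card_le_univ G
  have hGc : ⌈α * n⌉₊ ≤ G.card := le_trans (by omega) hGcard
  -- membership info for G
  have hGmem : ∀ j ∈ G, Xt j = X j := by
    intro j hj
    simpa [hGdef] using hj
  -- Step 1: good points have small radius
  have hgood : ∀ j ∈ G, r j ≤ 2 * B := by
    intro j hj
    rw [hrdef]
    show kthSmallest (fun j' => ‖Xt j - Xt j'‖) ⌈α * n⌉₊ ≤ 2 * B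
    apply kthSmallest_le _ (fun j' => norm_nonneg _) (by omega)
    refine le_trans hGc (Finset.card_le_card ?_)
    intro j' hj'
    simp only [Finset.mem_filter, Finset.mem_univ, true_and]
    rw [hGmem j hj, hGmem j' hj']
    calc ‖X j - X j'‖ ≤ ‖X j‖ + ‖X j'‖ := norm_sub_le _ _
    _ ≤ 2 * B := by linarith [hB j, hB j']
  -- Step 2: far points have weight zero
  have hfar : ∀ i, (∀ j ∈ G, 2 * B + 1 < ‖Xt i - Xt j‖) → sampleWeight g α Xt i = 0 := by
    intro i hi
    have hri : 2 * B + 1 ≤ r i := by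
      rw [hrdef]
      show (2:ℝ) * B + 1 ≤ kthSmallest (fun j => ‖Xt i - Xt j‖) ⌈α * n⌉₊
      apply le_kthSmallest hn0 _ hcn
      intro s hs
      by_contra hlt
      push_neg at hlt
      have hsub : (Finset.univ.filter fun j => ‖Xt i - Xt j‖ ≤ s) ⊆ Finset.univ \ G := by
        intro j hj
        simp only [Finset.mem_filter, Finset.mem_univ, true_and] at hj
        simp only [Finset.mem_sdiff, Finset.mem_univ, true_and]
        intro hjG
        linarith [hi j hjG]
      have hcard := le_trans hs (Finset.card_le_card hsub)
      rw [Finset.card_sdiff_of_subset (Finset.subset_univ G)] at hcard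
      simp only [Finset.card_univ, Fintype.card_fin] at hcard
      omega
    have hrank : n - k + 1 ≤ sampleRank r i := by
      have h1 : G ⊆ Finset.univ.filter fun j => r j < r i := by
        intro j hj
        simp only [Finset.mem_filter, Finset.mem_univ, true_and]
        exact lt_of_le_of_lt (hgood j hj) (by linarith)
      have h2 : 1 ≤ (Finset.univ.filter fun j => j ≤ i ∧ r j = r i).card :=
        Finset.card_pos.mpr ⟨i, by simp⟩
      have h3 := Finset.card_le_card h1
      unfold sampleRank
      omega
    have hq : (1:ℝ) - β ≤ (sampleRank r i : ℝ) / n := by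
      rw [le_div_iff₀ hnR]
      have hbn : (⌊β * n⌋₊ : ℝ) ≤ β * n := Nat.floor_le (by positivity)
      have hcast : ((n - k + 1 : ℕ) : ℝ) ≤ (sampleRank r i : ℝ) := by exact_mod_cast hrank
      rw [Nat.cast_add, Nat.cast_sub hkn] at hcast
      have hkb : (k:ℝ) ≤ (⌊β * n⌋₊ : ℝ) + 1 := by
        have : k ≤ ⌊β * n⌋₊ + 1 := by omega
        exact_mod_cast this
      push_cast at hcast
      nlinarith
    show sampleWeight g α Xt i = 0
    unfold sampleWeight
    rw [← hrdef]
    refine hg_zero _ ⟨by positivity, ?_⟩ hq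
    rw [div_le_one hnR]
    exact_mod_cast sampleRank_le r i
  -- weights are nonnegative
  have hw_mem : ∀ i : Fin n, (sampleRank r i : ℝ) / n ∈ Set.Icc (0:ℝ) 1 := by
    intro i
    constructor
    · positivity
    · rw [div_le_one hnR]; exact_mod_cast sampleRank_le r i
  have hw_nonneg : ∀ i, 0 ≤ sampleWeight g α Xt i := by
    intro i
    unfold sampleWeight
    rw [← hrdef]
    exact hg_nonneg _ (hw_mem i)
  -- the minimal-radius point has rank 1 and positive weight
  have hS : (Finset.univ.filter fun i => ∀ j, r i ≤ r j).Nonempty := by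
    obtain ⟨i₀, -, hmin⟩ := Finset.exists_min_image Finset.univ r hne
    exact ⟨i₀, by
      simp only [Finset.mem_filter, Finset.mem_univ, true_and]
      exact fun j => hmin j (Finset.mem_univ j)⟩
  set i₁ := (Finset.univ.filter fun i => ∀ j, r i ≤ r j).min' hS with hi₁def
  have hi₁S : ∀ j, r i₁ ≤ r j := by
    have h := Finset.min'_mem _ hS
    simp only [Finset.mem_filter, Finset.mem_univ, true_and] at h
    exact h
  have hrank1 : sampleRank r i₁ = 1 := by
    have h1 : (Finset.univ.filter fun j => r j < r i₁) = ∅ := by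
      rw [Finset.filter_eq_empty_iff]
      intro j _
      exact not_lt.mpr (hi₁S j)
    have h2 : (Finset.univ.filter fun j => j ≤ i₁ ∧ r j = r i₁) = {i₁} := by
      ext j
      simp only [Finset.mem_filter, Finset.mem_univ, true_and, Finset.mem_singleton]
      constructor
      · rintro ⟨hle, heq⟩
        refine le_antisymm hle (Finset.min'_le _ _ ?_)
        simp only [Finset.mem_filter, Finset.mem_univ, true_and]
        intro j'
        rw [heq]; exact hi₁S j'
      · rintro rfl; exact ⟨le_refl _, rfl⟩
    unfold sampleRank
    rw [h1, h2]
    simp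
  have hwpos : 0 < sampleWeight g α Xt i₁ := by
    unfold sampleWeight
    rw [← hrdef, hrank1, Nat.cast_one]
    apply hg_pos
    · constructor
      · positivity
      · rw [div_le_one hnR]; exact_mod_cast hn0
    · have h13 : (1:ℝ) / n ≤ 1 / 3 := by
        apply one_div_le_one_div_of_le
        · norm_num
        · exact_mod_cast hn3
      linarith
  have hsum : 0 < ∑ i, sampleWeight g α Xt i :=
    lt_of_lt_of_le hwpos
      (Finset.single_le_sum (fun i _ => hw_nonneg i) (Finset.mem_univ i₁))
  -- bound each term
  have hterm : ∀ i, ‖sampleWeight g α Xt i • Xt i‖ ≤ sampleWeight g α Xt i * (3 * B + 1) := by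
    intro i
    rcases eq_or_lt_of_le (hw_nonneg i) with h0 | hpos
    · rw [← h0]; simp
    · have hex : ∃ j ∈ G, ‖Xt i - Xt j‖ ≤ 2 * B + 1 := by
        by_contra hcon
        push_neg at hcon
        exact absurd (hfar i fun j hj => hcon j hj).symm (ne_of_lt hpos)
      obtain ⟨j, hjG, hd⟩ := hex
      have hnorm : ‖Xt i‖ ≤ 3 * B + 1 := by
        calc ‖Xt i‖ = ‖Xt j + (Xt i - Xt j)‖ := by congr 1; abel
        _ ≤ ‖Xt j‖ + ‖Xt i - Xt j‖ := norm_add_le _ _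
        _ ≤ 3 * B + 1 := by rw [hGmem j hjG] at hd ⊢; linarith [hB j, hd]
      rw [norm_smul, Real.norm_eq_abs, abs_of_pos hpos]
      exact mul_le_mul_of_nonneg_left hnorm (le_of_lt hpos)
  -- final bound
  have hns : ‖∑ i, sampleWeight g α Xt i • Xt i‖ ≤ ∑ i, sampleWeight g α Xt i * (3 * B + 1) :=
    le_trans (norm_sum_le _ _) (Finset.sum_le_sum fun i _ => hterm i)
  unfold trimmedMean
  rw [norm_smul, Real.norm_eq_abs, abs_of_pos (inv_pos.mpr hsum)]
  calc (∑ i, sampleWeight g α Xt i)⁻¹ * ‖∑ i, sampleWeight g α Xt i • Xt i‖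
      ≤ (∑ i, sampleWeight g α Xt i)⁻¹ * (∑ i, sampleWeight g α Xt i * (3 * B + 1)) :=
        mul_le_mul_of_nonneg_left hns (le_of_lt (inv_pos.mpr hsum))
  _ = 3 * B + 1 := by
      rw [← Finset.sum_mul, ← mul_assoc, inv_mul_cancel₀ (ne_of_gt hsum), one_mul]
end

section
/- If α > 0 and β > 0, then for every k ≥ 0 the weighted moment E_P[w_P(X)‖X‖^k] is finite. More precisely, w_P(v) > 0 implies r_P(v) ≤ G_P⁻¹(1−β), and hence E_P[w_P(X)‖X‖^k] ≤ (sup g)·(K + G_P⁻¹(1−β))^k, where K is a constant with ‖v‖ ≤ r_P(v) + K for all v ∈ H and G_P⁻¹(1−β) = inf{t : G_P(t) ≥ 1−β}. -/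
open MeasureTheory
open scoped RealInnerProductSpace

/-- `F_P(t; v) = P(‖X − v‖ ≤ t)`. -/
noncomputable def Fpop {H : Type*} [NormedAddCommGroup H] [MeasurableSpace H]
    (P : Measure H) (t : ℝ) (v : H) : ℝ :=
  (P {x | ‖x - v‖ ≤ t}).toReal

/-- The α-radius `r_P(v) = inf {t ≥ 0 : F_P(t; v) ≥ α}`. -/
noncomputable def rpop {H : Type*} [NormedAddCommGroup H] [MeasurableSpace H]
    (α : ℝ) (P : Measure H) (v : H) : ℝ :=
  sInf {t : ℝ | 0 ≤ t ∧ α ≤ Fpop P t v}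

/-- `G_P(t) = P(r_P(X) ≤ t)`. -/
noncomputable def Gpop {H : Type*} [NormedAddCommGroup H] [MeasurableSpace H]
    (α : ℝ) (P : Measure H) (t : ℝ) : ℝ :=
  (P {x | rpop α P x ≤ t}).toReal

/-- The population weight function `w_P(v) = g(G_P(r_P(v)))`. -/
noncomputable def wpop {H : Type*} [NormedAddCommGroup H] [MeasurableSpace H]
    (g : ℝ → ℝ) (α : ℝ) (P : Measure H) (v : H) : ℝ :=
  g (Gpop α P (rpop α P v))

/-- The population trimmed mean `μ(P) = E_P[w_P(X)X] / E_P[w_P(X)]`. -/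
noncomputable def meanPop {H : Type*} [NormedAddCommGroup H] [InnerProductSpace ℝ H]
    [CompleteSpace H] [MeasurableSpace H] (g : ℝ → ℝ) (α : ℝ) (P : Measure H) : H :=
  (∫ x, wpop g α P x ∂P)⁻¹ • ∫ x, wpop g α P x • x ∂P

/-- The population trimmed covariance operator
`C(P)(h) = E_P[w_P(X)⟨X − μ(P), h⟩(X − μ(P))] / E_P[w_P(X)]`. -/
noncomputable def covPop {H : Type*} [NormedAddCommGroup H] [InnerProductSpace ℝ H]
    [CompleteSpace H] [MeasurableSpace H] (g : ℝ → ℝ) (α : ℝ) (P : Measure H) (h : H) : H :=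
  (∫ x, wpop g α P x ∂P)⁻¹ •
    ∫ x, (wpop g α P x * ⟪x - meanPop g α P, h⟫) • (x - meanPop g α P) ∂P

/-!
Since `g` vanishes on `[1 - β, 1]`, a positive weight `w_P(v)` forces `G_P(r_P(v)) < 1 - β`; as
`G_P` is monotone and tends to `1`, this gives `r_P(v) ≤ G_P⁻¹(1 - β)`. With `‖v‖ ≤ r_P(v) + K`
the integrand `w_P(x) ‖x‖^k` is then bounded pointwise by `(sup g) (K + G_P⁻¹(1 - β))^k`.
-/

open Filter Topology Set

section

variable {H : Type*} [NormedAddCommGroup H] [MeasurableSpace H] (α : ℝ) (P : Measure H)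

theorem Gpop_mono [IsFiniteMeasure P] : Monotone (Gpop α P) :=
  fun _ _ hst => measureReal_mono fun _ hx => le_trans hx hst

theorem Gpop_mem_Icc [IsProbabilityMeasure P] (t : ℝ) : Gpop α P t ∈ Icc (0 : ℝ) 1 :=
  ⟨measureReal_nonneg, measureReal_le_one⟩

/-- `r_P` is real-valued, so the sublevel sets `{r_P ≤ t}` exhaust `H` as `t → ∞`. -/
theorem tendsto_Gpop_atTop [IsProbabilityMeasure P] : Tendsto (Gpop α P) atTop (𝓝 1) := by
  have hmono : Monotone fun t : ℝ => {x : H | rpop α P x ≤ t} :=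
    fun _ _ hst _ hx => le_trans hx hst
  have hunion : (⋃ t : ℝ, {x : H | rpop α P x ≤ t}) = univ :=
    eq_univ_of_forall fun x => mem_iUnion.2 ⟨rpop α P x, mem_ofPred.2 le_rfl⟩
  have h := tendsto_measure_iUnion_atTop (μ := P) hmono
  rw [hunion, measure_univ] at h
  exact ENNReal.toReal_one ▸ (ENNReal.tendsto_toReal ENNReal.one_ne_top).comp h

end

theorem Monotone.le_csInf_setOf_le {α β : Type*} [ConditionallyCompleteLinearOrder α] [Preorder β]
    {f : α → β} (hf : Monotone f) {p : β} {x : α}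
    (hne : {t | p ≤ f t}.Nonempty) (hx : f x < p) : x ≤ sInf {t | p ≤ f t} :=
  le_csInf hne fun _ ht => le_of_not_gt fun htx => (ht.trans (hf htx.le)).not_gt hx

section

variable {H : Type*} [NormedAddCommGroup H] [MeasurableSpace H] {g : ℝ → ℝ} {α p : ℝ}
  {P : Measure H} [IsProbabilityMeasure P]

theorem rpop_le_sInf_of_wpop_pos (hp : p < 1) (hg_zero : ∀ t ∈ Icc (0 : ℝ) 1, p ≤ t → g t = 0)
    {v : H} (hv : 0 < wpop g α P v) : rpop α P v ≤ sInf {t : ℝ | p ≤ Gpop α P t} := by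
  have hne : {t : ℝ | p ≤ Gpop α P t}.Nonempty :=
    (((tendsto_order.1 (tendsto_Gpop_atTop α P)).1 p hp).mono fun _ => le_of_lt).exists
  refine (Gpop_mono α P).le_csInf_setOf_le hne (lt_of_not_ge fun hle => ?_)
  exact hv.ne' (hg_zero _ (Gpop_mem_Icc α P _) hle)

theorem wpop_le_sSup (hg_bdd : BddAbove (g '' Icc (0 : ℝ) 1)) (v : H) :
    wpop g α P v ≤ sSup (g '' Icc (0 : ℝ) 1) :=
  le_csSup hg_bdd (mem_image_of_mem g (Gpop_mem_Icc α P _))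

theorem lintegral_wpop_mul_norm_pow_le (hp : p < 1)
    (hg_bdd : BddAbove (g '' Icc (0 : ℝ) 1))
    (hg_zero : ∀ t ∈ Icc (0 : ℝ) 1, p ≤ t → g t = 0)
    {K : ℝ} (hK : ∀ v : H, ‖v‖ ≤ rpop α P v + K) (k : ℕ) :
    ∫⁻ x, ENNReal.ofReal (wpop g α P x * ‖x‖ ^ k) ∂P ≤
      ENNReal.ofReal (sSup (g '' Icc (0 : ℝ) 1) * (K + sInf {t : ℝ | p ≤ Gpop α P t}) ^ k) := by
  set R := K + sInf {t : ℝ | p ≤ Gpop α P t}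
  have hpointwise : ∀ x : H, ENNReal.ofReal (wpop g α P x * ‖x‖ ^ k) ≤
      ENNReal.ofReal (sSup (g '' Icc (0 : ℝ) 1) * R ^ k) := by
    intro x
    rcases le_or_gt (wpop g α P x) 0 with hw | hw
    · rw [ENNReal.ofReal_of_nonpos (mul_nonpos_of_nonpos_of_nonneg hw (by positivity))]
      exact zero_le
    · have hxR : ‖x‖ ≤ R := by
        have := rpop_le_sInf_of_wpop_pos hp hg_zero hw
        linarith [hK x]
      refine ENNReal.ofReal_le_ofReal (mul_le_mul (wpop_le_sSup hg_bdd x)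
        (pow_le_pow_left₀ (norm_nonneg x) hxR k) (by positivity) ?_)
      exact hw.le.trans (wpop_le_sSup hg_bdd x)
  calc ∫⁻ x, ENNReal.ofReal (wpop g α P x * ‖x‖ ^ k) ∂P
      ≤ ∫⁻ _, ENNReal.ofReal (sSup (g '' Icc (0 : ℝ) 1) * R ^ k) ∂P := lintegral_mono hpointwise
    _ = ENNReal.ofReal (sSup (g '' Icc (0 : ℝ) 1) * R ^ k) := by simp

end

theorem weighted_moments_finite_general
    {H : Type*} [NormedAddCommGroup H] [MeasurableSpace H]
    (P : Measure H) [IsProbabilityMeasure P]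
    (α β : ℝ) (hβ : 0 < β)
    (g : ℝ → ℝ)
    (hg_bdd : BddAbove (g '' Set.Icc (0 : ℝ) 1))
    (hg_zero : ∀ t ∈ Set.Icc (0 : ℝ) 1, 1 - β ≤ t → g t = 0)
    (K : ℝ) (hK : ∀ v : H, ‖v‖ ≤ rpop α P v + K) :
    (∀ v : H, 0 < wpop g α P v →
        rpop α P v ≤ sInf {t : ℝ | 1 - β ≤ Gpop α P t}) ∧
    (∀ k : ℕ,
      (∫⁻ x, ENNReal.ofReal (wpop g α P x * ‖x‖ ^ k) ∂P) ≤
        ENNReal.ofReal (sSup (g '' Set.Icc (0 : ℝ) 1) *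
          (K + sInf {t : ℝ | 1 - β ≤ Gpop α P t}) ^ k)) ∧
    (∀ k : ℕ, (∫⁻ x, ENNReal.ofReal (wpop g α P x * ‖x‖ ^ k) ∂P) < ⊤) := by
  have hp : 1 - β < 1 := by linarith
  have hbound := lintegral_wpop_mul_norm_pow_le hp hg_bdd hg_zero hK
  exact ⟨fun _ => rpop_le_sInf_of_wpop_pos hp hg_zero, hbound,
    fun k => (hbound k).trans_lt ENNReal.ofReal_lt_top⟩

/-- If `α > 0` and `β > 0`, every weighted moment `E_P[w_P(X)‖X‖^k]` is
finite. More precisely, `w_P(v) > 0` implies `r_P(v) ≤ G_P⁻¹(1−β)`, and hence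
`E_P[w_P(X)‖X‖^k] ≤ (sup g)·(K + G_P⁻¹(1−β))^k`, where `K` satisfies
`‖v‖ ≤ r_P(v) + K` for all `v` and `G_P⁻¹(1−β) = inf {t : G_P(t) ≥ 1−β}`. -/
theorem weighted_moments_finite
    {H : Type*} [NormedAddCommGroup H] [InnerProductSpace ℝ H] [CompleteSpace H]
    [SecondCountableTopology H] [MeasurableSpace H] [BorelSpace H]
    (P : Measure H) [IsProbabilityMeasure P]
    (α β : ℝ) (hα : 0 < α) (hα' : α ≤ 1 / 2) (hβ : 0 < β) (hβ' : β ≤ 1 / 2)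
    (g : ℝ → ℝ)
    (hg_nonneg : ∀ t ∈ Set.Icc (0 : ℝ) 1, 0 ≤ g t)
    (hg_bdd : BddAbove (g '' Set.Icc (0 : ℝ) 1))
    (hg_mono : AntitoneOn g (Set.Icc (0 : ℝ) 1))
    (hg_pos : ∀ t ∈ Set.Icc (0 : ℝ) 1, t < 1 - β → 0 < g t)
    (hg_zero : ∀ t ∈ Set.Icc (0 : ℝ) 1, 1 - β ≤ t → g t = 0)
    (K : ℝ) (hK : ∀ v : H, ‖v‖ ≤ rpop α P v + K) :
    (∀ v : H, 0 < wpop g α P v →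
        rpop α P v ≤ sInf {t : ℝ | 1 - β ≤ Gpop α P t}) ∧
    (∀ k : ℕ,
      (∫⁻ x, ENNReal.ofReal (wpop g α P x * ‖x‖ ^ k) ∂P) ≤
        ENNReal.ofReal (sSup (g '' Set.Icc (0 : ℝ) 1) *
          (K + sInf {t : ℝ | 1 - β ≤ Gpop α P t}) ^ k)) ∧
    (∀ k : ℕ, (∫⁻ x, ENNReal.ofReal (wpop g α P x * ‖x‖ ^ k) ∂P) < ⊤) :=
  weighted_moments_finite_general P α β hβ g hg_bdd hg_zero K hK
end

section
/- Let P̃ be the pushforward of P under the map x ↦ aUx + b, where U is a unitary operator on H, a ≠ 0 is a real scalar, and b ∈ H. Then G_P̃(t) = G_P(t/|a|) for all t ≥ 0, and w_P̃(v) = w_P(U*(v−b)/a) for all v ∈ H, where U* is the adjoint of U. -/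
open MeasureTheory Pointwise
open scoped RealInnerProductSpace

/-- If `P̃` is the pushforward of `P` under `x ↦ a • U x + b` with `U`
unitary, `a ≠ 0`, `b ∈ H`, then `G_P̃(t) = G_P(t/|a|)` for all `t ≥ 0`, and
`w_P̃(v) = w_P(U*(v−b)/a)` for all `v ∈ H`, where `U*` is the adjoint of `U`. -/
theorem Gpop_wpop_equivariance
    {H : Type*} [NormedAddCommGroup H] [InnerProductSpace ℝ H] [CompleteSpace H]
    [SecondCountableTopology H] [MeasurableSpace H] [BorelSpace H]
    (P : Measure H) [IsProbabilityMeasure P]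
    (α β : ℝ) (hα : 0 < α) (hα' : α ≤ 1 / 2) (hβ : 0 < β) (hβ' : β ≤ 1 / 2)
    (g : ℝ → ℝ)
    (hg_nonneg : ∀ t ∈ Set.Icc (0 : ℝ) 1, 0 ≤ g t)
    (hg_bdd : BddAbove (g '' Set.Icc (0 : ℝ) 1))
    (hg_mono : AntitoneOn g (Set.Icc (0 : ℝ) 1))
    (hg_pos : ∀ t ∈ Set.Icc (0 : ℝ) 1, t < 1 - β → 0 < g t)
    (hg_zero : ∀ t ∈ Set.Icc (0 : ℝ) 1, 1 - β ≤ t → g t = 0)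
    (U : H ≃ₗᵢ[ℝ] H) (a : ℝ) (ha : a ≠ 0) (b : H)
    (Pt : Measure H) (hPt : Pt = Measure.map (fun x => a • U x + b) P) :
    (∀ t : ℝ, 0 ≤ t → Gpop α Pt t = Gpop α P (t / |a|)) ∧
    (∀ v : H,
      wpop g α Pt v =
        wpop g α P
          (a⁻¹ • ContinuousLinearMap.adjoint U.toLinearIsometry.toContinuousLinearMap
            (v - b))) := by
  have hadj : ∀ v : H,
      ContinuousLinearMap.adjoint U.toLinearIsometry.toContinuousLinearMap v = U.symm v := by
    have h := (ContinuousLinearMap.eq_adjoint_iff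
      (U.symm.toLinearIsometry.toContinuousLinearMap)
      (U.toLinearIsometry.toContinuousLinearMap)).2
      (fun x y => by
        simp only [LinearIsometry.coe_toContinuousLinearMap,
          LinearIsometryEquiv.coe_toLinearIsometry]
        rw [← U.inner_map_map (U.symm x) y, U.apply_symm_apply])
    intro v
    rw [← h]
    simp
  have ha' : (0:ℝ) < |a| := abs_pos.2 ha
  set S : H → H := fun v => a⁻¹ • U.symm (v - b) with hS
  let e : H ≃ₜ H :=
    { toFun := fun x => a • U x + b
      invFun := S
      left_inv := fun x => by
        simp only [hS, add_sub_cancel_right, _root_.map_smul, smul_smul, inv_mul_cancel₀ ha, one_smul,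
          LinearIsometryEquiv.symm_apply_apply]
      right_inv := fun v => by
        simp only [hS, _root_.map_smul, LinearIsometryEquiv.apply_symm_apply, smul_smul,
          mul_inv_cancel₀ ha, one_smul, add_sub_cancel, sub_add_cancel]
      continuous_toFun := by fun_prop
      continuous_invFun := by fun_prop }
  have hmap : ∀ s : Set H, Pt s = P ((fun x => a • U x + b) ⁻¹' s) := by
    intro s
    rw [hPt]
    have h1 : Measure.map (fun x => a • U x + b) P = Measure.map (⇑e.toMeasurableEquiv) P := rfl
    rw [h1, MeasurableEquiv.map_apply]
    rfl
  have hF : ∀ (t : ℝ) (v : H), Fpop Pt t v = Fpop P (t / |a|) (S v) := by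
    intro t v
    unfold Fpop
    rw [hmap]
    congr 2
    ext x
    simp only [Set.mem_preimage, Set.mem_setOf_eq]
    have h1 : a • U x + b - v = a • (U x - a⁻¹ • (v - b)) := by
      rw [smul_sub, smul_smul, mul_inv_cancel₀ ha, one_smul]
      abel
    have h2 : ‖U x - a⁻¹ • (v - b)‖ = ‖x - S v‖ := by
      calc ‖U x - a⁻¹ • (v - b)‖ = ‖U (x - a⁻¹ • U.symm (v - b))‖ := by
            rw [map_sub, _root_.map_smul, U.apply_symm_apply]
        _ = ‖x - a⁻¹ • U.symm (v - b)‖ := U.norm_map _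
    rw [h1, norm_smul, Real.norm_eq_abs, h2, mul_comm, ← le_div_iff₀ ha']
  have hr : ∀ v : H, rpop α Pt v = |a| * rpop α P (S v) := by
    intro v
    unfold rpop
    have hset : {t : ℝ | 0 ≤ t ∧ α ≤ Fpop Pt t v}
        = |a| • {s : ℝ | 0 ≤ s ∧ α ≤ Fpop P s (S v)} := by
      ext t
      simp only [Set.mem_smul_set, Set.mem_setOf_eq, hF, smul_eq_mul]
      constructor
      · rintro ⟨ht0, htα⟩
        exact ⟨t / |a|, ⟨div_nonneg ht0 ha'.le, htα⟩, by field_simp⟩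
      · rintro ⟨s, ⟨hs0, hsα⟩, rfl⟩
        refine ⟨by positivity, ?_⟩
        rwa [mul_comm, mul_div_assoc, div_self (ne_of_gt ha'), mul_one]
    rw [hset, Real.sInf_smul_of_nonneg (abs_nonneg a), smul_eq_mul]
  have hG : ∀ t : ℝ, Gpop α Pt t = Gpop α P (t / |a|) := by
    intro t
    unfold Gpop
    rw [hmap]
    congr 2
    ext x
    simp only [Set.mem_preimage, Set.mem_setOf_eq, hr]
    have hSx : S (a • U x + b) = x := e.left_inv x
    rw [hSx, mul_comm, ← le_div_iff₀ ha']
  refine ⟨fun t _ => hG t, fun v => ?_⟩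
  have hsv : a⁻¹ • ContinuousLinearMap.adjoint U.toLinearIsometry.toContinuousLinearMap (v - b)
      = S v := by rw [hadj]
  rw [hsv]
  unfold wpop
  rw [hr, hG]
  congr 2
  rw [mul_comm, mul_div_assoc, div_self (ne_of_gt ha'), mul_one]
end

section
/- Suppose X = μ₀ + Σₖ λₖ^{1/2} Zₖ φₖ almost surely, where the series converges almost surely in H, {φₖ} is an orthonormal system in H, λₖ > 0 with Σₖ λₖ < ∞, and the real random variables Zₖ are independent and each symmetrically distributed about 0 (Zₖ and −Zₖ have the same distribution). If α ∈ (0, 1/2] and β ∈ (0, 1/2], then for all j ≠ k, E_P[w_P(X)⟨φⱼ, X − μ₀⟩⟨φₖ, X − μ₀⟩] = 0. -/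
open MeasureTheory
open scoped RealInnerProductSpace

/-!
The reflection of `H` in the hyperplane through `μ₀` orthogonal to `φ j` changes the expansion of
`X` only by flipping the sign of `Z j`. By independence and the symmetry of `Z j`, the flipped
coefficient sequence has the same joint law as the original one, so the reflection preserves `P`.
Being an isometry, it then preserves the `α`-radius and hence the weight `w_P`, while it changes
the sign of `⟪φ j, x - μ₀⟫ * ⟪φ k, x - μ₀⟫`. The integral therefore equals its own negative.
-/

open ProbabilityTheory Filter

namespace ProbabilityTheory

theorem iIndepFun.map_fun_comp_eq {ι Ω : Type*} {𝓧 : ι → Type*} [∀ i, MeasurableSpace (𝓧 i)]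
    [MeasurableSpace Ω] {Q : Measure Ω} {Z : ∀ i, Ω → 𝓧 i} (hZ : ∀ i, Measurable (Z i))
    (hindep : iIndepFun Z Q) {f : ∀ i, 𝓧 i → 𝓧 i} (hf : ∀ i, Measurable (f i))
    (hfZ : ∀ i, Q.map (f i ∘ Z i) = Q.map (Z i)) :
    Q.map (fun ω i => f i (Z i ω)) = Q.map (fun ω i => Z i ω) := by
  have hfZ_law := (hindep.comp f hf).map_fun_eq_infinitePi_map fun i => (hf i).comp (hZ i)
  simp only [hfZ, Function.comp_apply] at hfZ_law
  rw [hfZ_law, hindep.map_fun_eq_infinitePi_map hZ]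

end ProbabilityTheory

-- The sum of the series is taken as a `limUnder` rather than a `tsum`, since measurability of
-- limits is available through `StronglyMeasurable.limUnder`.
theorem measurable_limUnder_sum_smul {ι E : Type*} [Countable ι] [NormedAddCommGroup E]
    [NormedSpace ℝ E] [CompleteSpace E] [MeasurableSpace E] [BorelSpace E] (b : ι → E) :
    Measurable fun z : ι → ℝ => limUnder atTop fun s : Finset ι => ∑ i ∈ s, z i • b i :=
  (StronglyMeasurable.limUnder fun s => Finset.stronglyMeasurable_fun_sum s
    fun i _ => (measurable_pi_apply i).stronglyMeasurable.smul_const (b i)).measurable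

theorem HasSum.limUnder_sum_eq {ι E : Type*} [AddCommMonoid E] [TopologicalSpace E] [T2Space E]
    {f : ι → E} {a : E} (h : HasSum f a) :
    limUnder atTop (fun s : Finset ι => ∑ i ∈ s, f i) = a :=
  Tendsto.limUnder_eq h

theorem map_affine_reflection_eq_of_hasSum {ι Ω E : Type*} [Countable ι] [DecidableEq ι]
    [MeasurableSpace Ω] {Q : Measure Ω} [NormedAddCommGroup E] [NormedSpace ℝ E] [CompleteSpace E]
    [MeasurableSpace E] [BorelSpace E]
    {Z : ι → Ω → ℝ} (hZ : ∀ i, Measurable (Z i)) (hindep : iIndepFun Z Q) {j : ι}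
    (hsym : Q.map (Z j) = Q.map (fun ω => -Z j ω))
    {b : ι → E} {L : E →L[ℝ] E} (hLj : L (b j) = -b j) (hL : ∀ i ≠ j, L (b i) = b i)
    {X : Ω → E} {a : E} (hexp : ∀ᵐ ω ∂Q, HasSum (fun i => Z i ω • b i) (X ω - a)) :
    Q.map (fun ω => L (X ω - a) + a) = Q.map X := by
  set T : (ι → ℝ) → E := fun z => (limUnder atTop fun s : Finset ι => ∑ i ∈ s, z i • b i) + a
  have hT : Measurable T := (measurable_limUnder_sum_smul b).add_const a
  set negAt : ∀ i, ℝ → ℝ := fun i x => if i = j then -x else x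
  have hnegAt : ∀ i, Measurable (negAt i) := fun i => by
    by_cases hi : i = j <;> simp only [negAt, hi, if_true, if_false] <;> fun_prop
  have hlaw : Q.map (fun ω i => negAt i (Z i ω)) = Q.map (fun ω i => Z i ω) := by
    refine hindep.map_fun_comp_eq hZ hnegAt fun i => ?_
    by_cases hi : i = j
    · subst hi; simp only [negAt, if_true]; exact hsym.symm
    · simp only [negAt, hi, if_false]; rfl
  have hX : X =ᵐ[Q] T ∘ fun ω i => Z i ω := by
    filter_upwards [hexp] with ω h
    simp only [T, Function.comp_apply, h.limUnder_sum_eq, sub_add_cancel]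
  have hLX : (fun ω => L (X ω - a) + a) =ᵐ[Q] T ∘ fun ω i => negAt i (Z i ω) := by
    filter_upwards [hexp] with ω h
    have hterm : ∀ i, L (Z i ω • b i) = negAt i (Z i ω) • b i := fun i => by
      by_cases hi : i = j
      · subst hi; simp [negAt, hLj]
      · simp [negAt, hi, hL i hi]
    have := h.mapL L
    simp only [hterm] at this
    simp only [T, Function.comp_apply, this.limUnder_sum_eq]
  have hζ : Measurable fun ω i => Z i ω := measurable_pi_lambda _ hZ
  have hζ' : Measurable fun ω i => negAt i (Z i ω) :=
    measurable_pi_lambda _ fun i => (hnegAt i).comp (hZ i)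
  rw [Measure.map_congr hLX, Measure.map_congr hX, ← Measure.map_map hT hζ', hlaw,
    Measure.map_map hT hζ]

section Invariance

variable {H : Type*} [NormedAddCommGroup H] [MeasurableSpace H] {P : Measure H} {e : H ≃ᵐ H}

theorem Fpop_apply_eq (he : MeasurePreserving e P P) (he_iso : Isometry e) (t : ℝ) (v : H) :
    Fpop P t (e v) = Fpop P t v := by
  unfold Fpop
  conv_lhs => rw [← he.map_eq, e.map_apply]
  congr 2
  ext x
  simp [← dist_eq_norm, he_iso.dist_eq]

theorem rpop_apply_eq (he : MeasurePreserving e P P) (he_iso : Isometry e) (α : ℝ) (v : H) :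
    rpop α P (e v) = rpop α P v := by
  simp only [rpop, Fpop_apply_eq he he_iso]

theorem wpop_apply_eq (he : MeasurePreserving e P P) (he_iso : Isometry e) (g : ℝ → ℝ) (α : ℝ)
    (v : H) : wpop g α P (e v) = wpop g α P v := by
  simp only [wpop, rpop_apply_eq he he_iso]

end Invariance

theorem integral_eq_zero_of_comp_eq_neg {α E : Type*} [MeasurableSpace α] [NormedAddCommGroup E]
    [NormedSpace ℝ E] {μ : Measure α} {e : α ≃ᵐ α} (he : MeasurePreserving e μ μ) {f : α → E}
    (hf : ∀ x, f (e x) = -f x) : ∫ x, f x ∂μ = 0 := by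
  have h := he.integral_comp' f
  simp only [hf, integral_neg] at h
  have h2 : (2 : ℝ) • ∫ x, f x ∂μ = 0 := by
    rw [two_smul]; nth_rw 1 [← h]; exact neg_add_cancel _
  exact (smul_eq_zero.mp h2).resolve_left two_ne_zero

theorem Submodule.inner_reflection_right {𝕜 E : Type*} [RCLike 𝕜] [NormedAddCommGroup E]
    [InnerProductSpace 𝕜 E] (K : Submodule 𝕜 E) [K.HasOrthogonalProjection] (u y : E) :
    inner 𝕜 u (K.reflection y) = inner 𝕜 (K.reflection u) y := by
  rw [← K.reflection.inner_map_map, reflection_reflection]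

noncomputable def hyperplaneReflection {H : Type*} [NormedAddCommGroup H] [InnerProductSpace ℝ H]
    [CompleteSpace H] (a u : H) : H ≃ᵢ H :=
  ((IsometryEquiv.subRight a).trans (ℝ ∙ u)ᗮ.reflection.toIsometryEquiv).trans
    (IsometryEquiv.addRight a)

theorem weighted_cross_moments_vanish_general
    {H : Type*} [NormedAddCommGroup H] [InnerProductSpace ℝ H] [CompleteSpace H]
    [MeasurableSpace H] [BorelSpace H]
    {Ω : Type*} [MeasurableSpace Ω] (Q : Measure Ω)
    (X : Ω → H) (hX : Measurable X)
    (Z : ℕ → Ω → ℝ) (hZ : ∀ k, Measurable (Z k))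
    (hindep : ProbabilityTheory.iIndepFun Z Q)
    (hsymZ : ∀ k, Measure.map (Z k) Q = Measure.map (fun ω => -Z k ω) Q)
    (φ : ℕ → H) (hφ : Orthonormal ℝ φ)
    (lam : ℕ → ℝ)
    (μ₀ : H)
    (hexp : ∀ᵐ ω ∂Q, HasSum (fun k => (Real.sqrt (lam k) * Z k ω) • φ k) (X ω - μ₀))
    (P : Measure H) (hP : P = Measure.map X Q)
    (α : ℝ)
    (g : ℝ → ℝ)
    :
    ∀ j k : ℕ, j ≠ k →
      ∫ x, wpop g α P x * (⟪φ j, x - μ₀⟫ * ⟪φ k, x - μ₀⟫) ∂P = 0 := by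
  intro j k hjk
  set R := (ℝ ∙ φ j)ᗮ.reflection
  set e := (hyperplaneReflection μ₀ (φ j)).toHomeomorph.toMeasurableEquiv
  have he_iso : Isometry e := (hyperplaneReflection μ₀ (φ j)).isometry
  have he_sub : ∀ x, e x - μ₀ = R (x - μ₀) := fun x => add_sub_cancel_right _ _
  have hRj : R (φ j) = -φ j := Submodule.reflection_orthogonalComplement_singleton_eq_neg (φ j)
  have hR : ∀ i ≠ j, R (φ i) = φ i := fun i hi => Submodule.reflection_mem_subspace_eq_self
    (Submodule.mem_orthogonal_singleton_iff_inner_right.mpr (hφ.inner_eq_zero hi.symm))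
  have he : MeasurePreserving e P P := by
    refine ⟨e.measurable, ?_⟩
    have hexp' : ∀ᵐ ω ∂Q, HasSum (fun i => Z i ω • (√(lam i) • φ i)) (X ω - μ₀) := by
      filter_upwards [hexp] with ω h
      simpa only [smul_smul, mul_comm] using h
    rw [hP, Measure.map_map e.measurable hX]
    exact map_affine_reflection_eq_of_hasSum hZ hindep (hsymZ j) (L := (R : H →L[ℝ] H))
      (by simp [hRj]) (fun i hi => by simp [hR i hi]) hexp'
  refine integral_eq_zero_of_comp_eq_neg he fun x => ?_
  rw [wpop_apply_eq he he_iso, he_sub, Submodule.inner_reflection_right,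
    Submodule.inner_reflection_right, hRj, hR k hjk.symm, inner_neg_left]
  ring

/-- If `X = μ₀ + Σₖ λₖ^{1/2} Zₖ φₖ` a.s., with `{φₖ}` orthonormal,
`λₖ > 0`, `Σₖ λₖ < ∞`, and the `Zₖ` independent and symmetric about 0, then for `j ≠ k`,
`E_P[w_P(X)⟨φⱼ, X − μ₀⟩⟨φₖ, X − μ₀⟩] = 0`. -/
theorem weighted_cross_moments_vanish
    {H : Type*} [NormedAddCommGroup H] [InnerProductSpace ℝ H] [CompleteSpace H]
    [SecondCountableTopology H] [MeasurableSpace H] [BorelSpace H]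
    {Ω : Type*} [MeasurableSpace Ω] (Q : Measure Ω) [IsProbabilityMeasure Q]
    (X : Ω → H) (hX : Measurable X)
    (Z : ℕ → Ω → ℝ) (hZ : ∀ k, Measurable (Z k))
    (hindep : ProbabilityTheory.iIndepFun Z Q)
    (hsymZ : ∀ k, Measure.map (Z k) Q = Measure.map (fun ω => -Z k ω) Q)
    (φ : ℕ → H) (hφ : Orthonormal ℝ φ)
    (lam : ℕ → ℝ) (hlam : ∀ k, 0 < lam k) (hlamsum : Summable lam)
    (μ₀ : H)
    (hexp : ∀ᵐ ω ∂Q, HasSum (fun k => (Real.sqrt (lam k) * Z k ω) • φ k) (X ω - μ₀))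
    (P : Measure H) (hP : P = Measure.map X Q)
    (α β : ℝ) (hα : 0 < α) (hα' : α ≤ 1 / 2) (hβ : 0 < β) (hβ' : β ≤ 1 / 2)
    (g : ℝ → ℝ)
    (hg_nonneg : ∀ t ∈ Set.Icc (0 : ℝ) 1, 0 ≤ g t)
    (hg_bdd : BddAbove (g '' Set.Icc (0 : ℝ) 1))
    (hg_mono : AntitoneOn g (Set.Icc (0 : ℝ) 1))
    (hg_pos : ∀ t ∈ Set.Icc (0 : ℝ) 1, t < 1 - β → 0 < g t)
    (hg_zero : ∀ t ∈ Set.Icc (0 : ℝ) 1, 1 - β ≤ t → g t = 0)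
    :
    ∀ j k : ℕ, j ≠ k →
      ∫ x, wpop g α P x * (⟪φ j, x - μ₀⟫ * ⟪φ k, x - μ₀⟫) ∂P = 0 :=
  weighted_cross_moments_vanish_general Q X hX Z hZ hindep hsymZ φ hφ lam μ₀ hexp P hP α g
end

section
/- Suppose X = μ₀ + Σₖ λₖ^{1/2} Zₖ φₖ almost surely, where the series converges almost surely in H, {φₖ} is an orthonormal system in H, λₖ > 0 with Σₖ λₖ < ∞, and the real random variables Zₖ are independent, identically distributed, and each symmetrically distributed about 0. If α ∈ (0, 1/2] and β ∈ (0, 1/2], then λⱼ = λₖ implies E_P[w_P(X)⟨φⱼ, X − μ₀⟩²] = E_P[w_P(X)⟨φₖ, X − μ₀⟩²]; that is, equal eigenvalues of the expansion yield equal trimmed eigenvalues λ̃ⱼ = λ̃ₖ. -/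
/-!
Swapping `φ j` and `φ k` is the reflection `R` of `H` in the hyperplane orthogonal to
`φ j - φ k`; let `T x = μ₀ + R (x - μ₀)`. Applying `R` to the expansion of `X - μ₀` and
reindexing by the transposition `(j k)` gives the same series with the coefficient sequence
`(Z i)` permuted; as the `Z i` are i.i.d. the permuted sequence has the same law, and since
`λ j = λ k` the weights `√λ i` are unchanged, so `T X` has the same law `P` as `X`. Being an
isometry preserving `P`, `T` leaves `F_P`, `r_P` and hence `w_P` invariant, and the change of
variables `x ↦ T x` turns `⟪φ j, x - μ₀⟫` into `⟪φ k, x - μ₀⟫`.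
-/

open MeasureTheory
open scoped RealInnerProductSpace

open MeasureTheory ProbabilityTheory Submodule

section Reflection

variable {H : Type*} [NormedAddCommGroup H] [InnerProductSpace ℝ H]

theorem Orthonormal.reflection_apply_swap {ι : Type*} [DecidableEq ι] {φ : ι → H}
    (hφ : Orthonormal ℝ φ) (a b i : ι) :
    reflection (ℝ ∙ (φ a - φ b))ᗮ (φ i) = φ (Equiv.swap a b i) := by
  have hab : reflection (ℝ ∙ (φ a - φ b))ᗮ (φ a) = φ b :=
    reflection_sub (by rw [hφ.1 a, hφ.1 b])
  rcases eq_or_ne i a with rfl | hia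
  · rw [Equiv.swap_apply_left, hab]
  rcases eq_or_ne i b with rfl | hib
  · rw [Equiv.swap_apply_right]
    simpa [hab] using reflection_reflection (ℝ ∙ (φ a - φ i))ᗮ (φ a)
  rw [Equiv.swap_apply_of_ne_of_ne hia hib]
  refine reflection_mem_subspace_eq_self ?_
  rw [mem_orthogonal_singleton_iff_inner_right, inner_sub_left, hφ.2 hia.symm, hφ.2 hib.symm,
    sub_zero]

theorem Orthonormal.inner_reflection_swap {ι : Type*} [DecidableEq ι] {φ : ι → H}
    (hφ : Orthonormal ℝ φ) (a b i : ι) (x : H) :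
    ⟪φ i, reflection (ℝ ∙ (φ a - φ b))ᗮ x⟫ = ⟪φ (Equiv.swap a b i), x⟫ := by
  rw [← hφ.reflection_apply_swap, ← (reflection (ℝ ∙ (φ a - φ b))ᗮ).inner_map_map,
    reflection_reflection]

theorem HasSum.reflection_swap {ι : Type*} [DecidableEq ι] {φ : ι → H} (hφ : Orthonormal ℝ φ)
    (a b : ι) {c : ι → ℝ} {x : H} (h : HasSum (fun i => c i • φ i) x) :
    HasSum (fun i => c (Equiv.swap a b i) • φ i) (reflection (ℝ ∙ (φ a - φ b))ᗮ x) := by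
  have h' := h.map (reflection (ℝ ∙ (φ a - φ b))ᗮ) (reflection _).continuous
  simp only [Function.comp_def, map_smul, hφ.reflection_apply_swap] at h'
  rw [← (Equiv.swap a b).hasSum_iff] at h'
  simpa only [Function.comp_def, Equiv.swap_apply_self] using h'

end Reflection

section Invariance

variable {H : Type*} [NormedAddCommGroup H] [MeasurableSpace H] [OpensMeasurableSpace H]
  {P : Measure H} {T : H → H}

theorem Fpop_comp_isometry (hT : Isometry T) (hP : MeasurePreserving T P P) (t : ℝ) (v : H) :
    Fpop P t (T v) = Fpop P t v := by
  have hball : MeasurableSet {x | ‖x - T v‖ ≤ t} :=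
    (isClosed_le (by fun_prop) continuous_const).measurableSet
  rw [Fpop, Fpop, ← hP.measure_preimage hball.nullMeasurableSet]
  simp only [Set.preimage_ofPred_eq, ← dist_eq_norm, hT.dist_eq]

theorem rpop_comp_isometry (hT : Isometry T) (hP : MeasurePreserving T P P) (α : ℝ) (v : H) :
    rpop α P (T v) = rpop α P v := by
  simp only [rpop, Fpop_comp_isometry hT hP]

theorem wpop_comp_isometry (hT : Isometry T) (hP : MeasurePreserving T P P) (g : ℝ → ℝ) (α : ℝ)
    (v : H) : wpop g α P (T v) = wpop g α P v := by
  rw [wpop, wpop, rpop_comp_isometry hT hP]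

end Invariance

theorem ProbabilityTheory.IdentDistrib.of_ae_hasSum {Ω Ω' E H ι : Type*} [MeasurableSpace Ω]
    [MeasurableSpace Ω'] [MeasurableSpace E] [NormedAddCommGroup H] [CompleteSpace H]
    [MeasurableSpace H] [BorelSpace H] [Countable ι] {μ : Measure Ω} {ν : Measure Ω'}
    {Y : Ω → E} {Y' : Ω' → E} (hY : IdentDistrib Y Y' μ ν) {f : ι → E → H}
    (hf : ∀ i, StronglyMeasurable (f i)) {A : Ω → H} {B : Ω' → H}
    (hA : ∀ᵐ ω ∂μ, HasSum (fun i => f i (Y ω)) (A ω))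
    (hB : ∀ᵐ ω ∂ν, HasSum (fun i => f i (Y' ω)) (B ω)) :
    IdentDistrib A B μ ν := by
  have hF : Measurable fun z => ∑' i, f i z := (StronglyMeasurable.tsum hf).measurable
  have hAF : (fun ω => ∑' i, f i (Y ω)) =ᵐ[μ] A := hA.mono fun _ h => h.tsum_eq
  have hBF : (fun ω => ∑' i, f i (Y' ω)) =ᵐ[ν] B := hB.mono fun _ h => h.tsum_eq
  exact ((IdentDistrib.of_ae_eq (hF.comp_aemeasurable hY.aemeasurable_fst) hAF).symm.trans
    (hY.comp hF)).trans (IdentDistrib.of_ae_eq (hF.comp_aemeasurable hY.aemeasurable_snd) hBF)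

theorem map_reflection_swap_eq_map_of_iid_expansion {H Ω : Type*} [NormedAddCommGroup H]
    [InnerProductSpace ℝ H] [CompleteSpace H] [MeasurableSpace H] [BorelSpace H]
    [MeasurableSpace Ω] {Q : Measure Ω} {X : Ω → H} (hX : Measurable X)
    {Z : ℕ → Ω → ℝ} (hZ : ∀ k, Measurable (Z k)) (hindep : iIndepFun Z Q)
    (hid : ∀ j k : ℕ, Q.map (Z j) = Q.map (Z k)) {φ : ℕ → H} (hφ : Orthonormal ℝ φ)
    {lam : ℕ → ℝ} {μ₀ : H}
    (hexp : ∀ᵐ ω ∂Q, HasSum (fun k => (√(lam k) * Z k ω) • φ k) (X ω - μ₀))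
    {j k : ℕ} (hjk : lam j = lam k) :
    (Q.map X).map (fun x => μ₀ + reflection (ℝ ∙ (φ j - φ k))ᗮ (x - μ₀)) = Q.map X := by
  have hlam : ∀ i, lam (Equiv.swap j k i) = lam i := fun i => by
    rw [Equiv.swap_apply_def]; split_ifs <;> grind
  have hZ_swap : IdentDistrib (fun ω i => Z i ω) (fun ω i => Z (Equiv.swap j k i) ω) Q Q :=
    IdentDistrib.pi (fun i => ⟨(hZ i).aemeasurable, (hZ _).aemeasurable, hid _ _⟩)
      hindep (hindep.precomp (Equiv.swap j k).injective)
  have hcentered : IdentDistrib (fun ω => X ω - μ₀)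
      (fun ω => reflection (ℝ ∙ (φ j - φ k))ᗮ (X ω - μ₀)) Q Q :=
    hZ_swap.of_ae_hasSum (f := fun i z => (√(lam i) * z i) • φ i) (fun i => by fun_prop) hexp
      (hexp.mono fun ω h => by simpa only [hlam] using h.reflection_swap hφ j k)
  have hmeas : Measurable fun x => μ₀ + reflection (ℝ ∙ (φ j - φ k))ᗮ (x - μ₀) := by fun_prop
  rw [Measure.map_map hmeas hX]
  simpa only [Function.comp_def, add_sub_cancel] using
    (hcentered.comp (measurable_const_add μ₀)).map_eq.symm

theorem trimmed_eigenvalues_of_equal_eigenvalues_general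
    {H : Type*} [NormedAddCommGroup H] [InnerProductSpace ℝ H] [CompleteSpace H]
    [MeasurableSpace H] [BorelSpace H]
    {Ω : Type*} [MeasurableSpace Ω] (Q : Measure Ω)
    (X : Ω → H) (hX : Measurable X)
    (Z : ℕ → Ω → ℝ) (hZ : ∀ k, Measurable (Z k))
    (hindep : ProbabilityTheory.iIndepFun Z Q)
    (φ : ℕ → H) (hφ : Orthonormal ℝ φ)
    (lam : ℕ → ℝ)
    (μ₀ : H)
    (hexp : ∀ᵐ ω ∂Q, HasSum (fun k => (Real.sqrt (lam k) * Z k ω) • φ k) (X ω - μ₀))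
    (P : Measure H) (hP : P = Measure.map X Q)
    (α : ℝ)
    (g : ℝ → ℝ)
    (hid : ∀ j k : ℕ, Measure.map (Z j) Q = Measure.map (Z k) Q) :
    ∀ j k : ℕ, lam j = lam k →
      ∫ x, wpop g α P x * ⟪φ j, x - μ₀⟫ ^ 2 ∂P =
        ∫ x, wpop g α P x * ⟪φ k, x - μ₀⟫ ^ 2 ∂P := by
  intro j k hjk
  have hT : Isometry fun x => μ₀ + reflection (ℝ ∙ (φ j - φ k))ᗮ (x - μ₀) :=
    (IsometryEquiv.addLeft μ₀).isometry.comp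
      ((reflection _).isometry.comp (IsometryEquiv.subRight μ₀).isometry)
  have hTP : MeasurePreserving (fun x => μ₀ + reflection (ℝ ∙ (φ j - φ k))ᗮ (x - μ₀)) P P :=
    ⟨hT.continuous.measurable,
      hP ▸ map_reflection_swap_eq_map_of_iid_expansion hX hZ hindep hid hφ hexp hjk⟩
  calc ∫ x, wpop g α P x * ⟪φ j, x - μ₀⟫ ^ 2 ∂P
      = ∫ x, wpop g α P (μ₀ + reflection (ℝ ∙ (φ j - φ k))ᗮ (x - μ₀)) *
          ⟪φ j, μ₀ + reflection (ℝ ∙ (φ j - φ k))ᗮ (x - μ₀) - μ₀⟫ ^ 2 ∂P :=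
        (hTP.integral_comp hT.isClosedEmbedding.measurableEmbedding _).symm
    _ = ∫ x, wpop g α P x * ⟪φ k, x - μ₀⟫ ^ 2 ∂P := by
        simp only [wpop_comp_isometry hT hTP, add_sub_cancel_left, hφ.inner_reflection_swap,
          Equiv.swap_apply_left]

/-- If `X = μ₀ + Σₖ λₖ^{1/2} Zₖ φₖ` a.s., with `{φₖ}` orthonormal,
`λₖ > 0`, `Σₖ λₖ < ∞`, and the `Zₖ` independent, identically distributed and symmetric
about 0, then `λⱼ = λₖ` implies
`E_P[w_P(X)⟨φⱼ, X − μ₀⟩²] = E_P[w_P(X)⟨φₖ, X − μ₀⟩²]`, i.e. equal eigenvalues of the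
expansion yield equal trimmed eigenvalues `λ̃ⱼ = λ̃ₖ`. -/
theorem trimmed_eigenvalues_of_equal_eigenvalues
    {H : Type*} [NormedAddCommGroup H] [InnerProductSpace ℝ H] [CompleteSpace H]
    [SecondCountableTopology H] [MeasurableSpace H] [BorelSpace H]
    {Ω : Type*} [MeasurableSpace Ω] (Q : Measure Ω) [IsProbabilityMeasure Q]
    (X : Ω → H) (hX : Measurable X)
    (Z : ℕ → Ω → ℝ) (hZ : ∀ k, Measurable (Z k))
    (hindep : ProbabilityTheory.iIndepFun Z Q)
    (hsymZ : ∀ k, Measure.map (Z k) Q = Measure.map (fun ω => -Z k ω) Q)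
    (φ : ℕ → H) (hφ : Orthonormal ℝ φ)
    (lam : ℕ → ℝ) (hlam : ∀ k, 0 < lam k) (hlamsum : Summable lam)
    (μ₀ : H)
    (hexp : ∀ᵐ ω ∂Q, HasSum (fun k => (Real.sqrt (lam k) * Z k ω) • φ k) (X ω - μ₀))
    (P : Measure H) (hP : P = Measure.map X Q)
    (α β : ℝ) (hα : 0 < α) (hα' : α ≤ 1 / 2) (hβ : 0 < β) (hβ' : β ≤ 1 / 2)
    (g : ℝ → ℝ)
    (hg_nonneg : ∀ t ∈ Set.Icc (0 : ℝ) 1, 0 ≤ g t)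
    (hg_bdd : BddAbove (g '' Set.Icc (0 : ℝ) 1))
    (hg_mono : AntitoneOn g (Set.Icc (0 : ℝ) 1))
    (hg_pos : ∀ t ∈ Set.Icc (0 : ℝ) 1, t < 1 - β → 0 < g t)
    (hg_zero : ∀ t ∈ Set.Icc (0 : ℝ) 1, 1 - β ≤ t → g t = 0)
    (hid : ∀ j k : ℕ, Measure.map (Z j) Q = Measure.map (Z k) Q) :
    ∀ j k : ℕ, lam j = lam k →
      ∫ x, wpop g α P x * ⟪φ j, x - μ₀⟫ ^ 2 ∂P =
        ∫ x, wpop g α P x * ⟪φ k, x - μ₀⟫ ^ 2 ∂P :=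
  trimmed_eigenvalues_of_equal_eigenvalues_general Q X hX Z hZ hindep φ hφ lam μ₀ hexp P hP α g hid
end
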